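/- arXiv:1804.10903 — 4 statements merged into one kernel-verified Lean document; each statement's English description precedes it below -/
import Mathlib

section
/- For quaternions p and s with s ∉ [p], the slice-regular Cauchy kernel inverse satisfies the identity (p² - 2 Re(s) p + |s|²)⁻¹ (p - s̄) = ((p - s̄)⁻¹ p (p - s̄) - s)⁻¹. -/
open Quaternion

/-- The 2-sphere `[p]` associated to a quaternion `p`. -/
def quatSphere (p : ℍ[ℝ]) : Set ℍ[ℝ] :=
  {q : ℍ[ℝ] | q.re = p.re ∧ ‖q.im‖ = ‖p.im‖}

/-!
Since `s + s̄ = 2 Re(s)` and `s̄ s = |s|²` are real, hence central,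
`p² - 2 Re(s) p + |s|² = p (p - s̄) - (p - s̄) s = (p - s̄) ((p - s̄)⁻¹ p (p - s̄) - s)`,
and inverting this product and cancelling `p - s̄` gives the identity. The quadratic has real part
`(Re p - Re s)² + |Im s|² - |Im p|²` and imaginary part `2 (Re p - Re s) Im p`, so it vanishes
exactly when `s ∈ [p]`; this excluded case is also the only one in which `p - s̄` can vanish.
-/

theorem inv_mul_eq_inv_inv_mul_mul_sub {K : Type*} [DivisionRing K] {p q s : K}
    (h : p * q - q * s ≠ 0) : (p * q - q * s)⁻¹ * q = (q⁻¹ * p * q - s)⁻¹ := by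
  have hq : q ≠ 0 := by rintro rfl; simp at h
  have hfactor : p * q - q * s = q * (q⁻¹ * p * q - s) := by
    rw [mul_sub, ← mul_assoc, ← mul_assoc, mul_inv_cancel₀ hq, one_mul]
  rw [hfactor, mul_inv_rev, mul_assoc, inv_mul_cancel₀ hq, mul_one]

namespace Quaternion

section CommRing

variable {R : Type*} [CommRing R]

def sphericalQuadratic (s p : ℍ[R]) : ℍ[R] :=
  p ^ 2 - 2 * (s.re : ℍ[R]) * p + (normSq s : R)

theorem sphericalQuadratic_eq_mul_sub_mul (s p : ℍ[R]) :
    sphericalQuadratic s p = p * (p - star s) - (p - star s) * s := by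
  calc sphericalQuadratic s p = p ^ 2 - p * (s + star s) + star s * s := by
        rw [sphericalQuadratic, self_add_star, star_mul_self, ← mul_assoc,
          (Commute.ofNat_right p 2).eq, mul_assoc, mul_assoc, coe_commutes]
    _ = p * (p - star s) - (p - star s) * s := by noncomm_ring

theorem re_sphericalQuadratic (s p : ℍ[R]) :
    (sphericalQuadratic s p).re = (p.re - s.re) ^ 2 + normSq s.im - normSq p.im := by
  simp [sphericalQuadratic, sq, normSq_def', two_mul, add_mul]
  ring

theorem im_sphericalQuadratic (s p : ℍ[R]) :
    (sphericalQuadratic s p).im = (2 * (p.re - s.re)) • p.im := by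
  ext <;> simp [sphericalQuadratic, sq, two_mul, add_mul] <;> ring

end CommRing

section LinearOrderedCommRing

variable {R : Type*} [CommRing R] [LinearOrder R] [IsStrictOrderedRing R]

theorem sphericalQuadratic_eq_zero_iff {s p : ℍ[R]} :
    sphericalQuadratic s p = 0 ↔ s.re = p.re ∧ normSq s.im = normSq p.im := by
  constructor
  · intro h
    have hre := re_sphericalQuadratic s p
    have him := im_sphericalQuadratic s p
    rw [h, re_zero] at hre
    rw [h, im_zero, eq_comm, smul_eq_zero] at him
    have hre_eq : s.re = p.re := by
      by_contra hne
      have hp_im : p.im = 0 :=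
        him.resolve_left (mul_ne_zero two_ne_zero (sub_ne_zero.mpr (Ne.symm hne)))
      rw [hp_im, map_zero] at hre
      have hnonneg : 0 ≤ normSq s.im := normSq_nonneg
      exact hne (by nlinarith [sq_nonneg (p.re - s.re)])
    refine ⟨hre_eq, ?_⟩
    rw [hre_eq, sub_self] at hre
    linear_combination -hre
  · rintro ⟨hre_eq, hnormSq⟩
    rw [← re_add_im (sphericalQuadratic s p), re_sphericalQuadratic, im_sphericalQuadratic,
      hre_eq, hnormSq]
    simp

end LinearOrderedCommRing

end Quaternion

theorem mem_quatSphere_iff {p s : ℍ[ℝ]} :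
    s ∈ quatSphere p ↔ s.re = p.re ∧ normSq s.im = normSq p.im := by
  change s.re = p.re ∧ ‖s.im‖ = ‖p.im‖ ↔ _
  rw [normSq_eq_norm_mul_self, normSq_eq_norm_mul_self,
    mul_self_inj (norm_nonneg _) (norm_nonneg _)]

/-- For `s ∉ [p]`, the slice-regular Cauchy kernel satisfies
`(p² - 2 Re(s) p + |s|²)⁻¹ (p - s̄) = ((p - s̄)⁻¹ p (p - s̄) - s)⁻¹`. -/
theorem cauchyKernel_eq (p s : ℍ[ℝ]) (hs : s ∉ quatSphere p) :
    (p ^ 2 - 2 * ((s.re : ℝ) : ℍ[ℝ]) * p + ((‖s‖ ^ 2 : ℝ) : ℍ[ℝ]))⁻¹ * (p - star s)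
      = ((p - star s)⁻¹ * p * (p - star s) - s)⁻¹ := by
  have hΔ : p ^ 2 - 2 * ((s.re : ℝ) : ℍ[ℝ]) * p + ((‖s‖ ^ 2 : ℝ) : ℍ[ℝ])
      = sphericalQuadratic s p := by
    rw [sphericalQuadratic, normSq_eq_norm_mul_self, ← sq]
  rw [hΔ, sphericalQuadratic_eq_mul_sub_mul]
  apply inv_mul_eq_inv_inv_mul_mul_sub
  rwa [← sphericalQuadratic_eq_mul_sub_mul, Ne, sphericalQuadratic_eq_zero_iff,
    ← mem_quatSphere_iff]
end

section
/- For quaternions p, s with s ∉ [p], the quantity |(p² - 2 Re(s) p + |s|²)⁻¹ (p - s̄)| is bounded above by (dist([p], s))⁻¹, where dist([p], s) = inf{|q - s| : q ∈ [p]}. -/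
/-!
Write `p = x + P`, `s = a + S` with `P, S` purely imaginary, `c = |P|`, `b = |S|`. Since `P² = -c²`,
`p² - 2 a p + |s|² = ((x - a)² + b² - c²) + 2 (x - a) P` lies in the complex slice of `p`, and
`|p² - 2 a p + |s|²|² = ((x - a)² + (c - b)²) ((x - a)² + (c + b)²)`.
The first factor is `dist([p], s)²`, attained at `x + (c / b) S` (at `p` if `S = 0`), and the
second dominates `|p - s̄|² = (x - a)² + |P + S|²` by the triangle inequality.
-/

open Quaternion

theorem Quaternion.norm_sq_eq_re_sq_add_norm_im_sq (q : ℍ[ℝ]) :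
    ‖q‖ ^ 2 = q.re ^ 2 + ‖q.im‖ ^ 2 := by
  simp only [sq, ← normSq_eq_norm_mul_self, normSq_def', re_im, imI_im, imJ_im, imK_im]
  ring

theorem Quaternion.dist_sq_eq_re_sq_add_dist_im_sq (q r : ℍ[ℝ]) :
    dist q r ^ 2 = (q.re - r.re) ^ 2 + dist q.im r.im ^ 2 := by
  rw [dist_eq_norm, dist_eq_norm, norm_sq_eq_re_sq_add_norm_im_sq, re_sub, im_sub]

/-- `Q_s(p)`, the denominator of the left Cauchy kernel `S_L⁻¹(s, p)`. -/
noncomputable def charQuadratic (s p : ℍ[ℝ]) : ℍ[ℝ] :=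
  p ^ 2 - 2 * ((s.re : ℝ) : ℍ[ℝ]) * p + ((‖s‖ ^ 2 : ℝ) : ℍ[ℝ])

theorem sq_sub_two_mul_add_eq_coe_add_smul_im (p : ℍ[ℝ]) (a n : ℝ) :
    p ^ 2 - 2 * (a : ℍ[ℝ]) * p + (n : ℍ[ℝ])
      = (((p.re - a) ^ 2 - ‖p.im‖ ^ 2 + n - a ^ 2 : ℝ) : ℍ[ℝ]) + (2 * (p.re - a)) • p.im := by
  rw [sq ‖p.im‖, ← normSq_eq_norm_mul_self, normSq_def',
    show (2 : ℍ[ℝ]) * a = ((2 * a : ℝ) : ℍ[ℝ]) by rw [coe_mul]; rfl]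
  ext <;> simp [sq] <;> ring

theorem norm_sq_charQuadratic (p s : ℍ[ℝ]) :
    ‖charQuadratic s p‖ ^ 2 = ((p.re - s.re) ^ 2 + (‖p.im‖ - ‖s.im‖) ^ 2)
      * ((p.re - s.re) ^ 2 + (‖p.im‖ + ‖s.im‖) ^ 2) := by
  rw [charQuadratic, sq_sub_two_mul_add_eq_coe_add_smul_im, norm_sq_eq_re_sq_add_norm_im_sq,
    norm_sq_eq_re_sq_add_norm_im_sq s]
  simp only [re_add, re_coe, re_smul, re_im, im_add, im_coe, im_smul, im_idem, smul_zero,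
    zero_add, add_zero, norm_smul, Real.norm_eq_abs, mul_pow, sq_abs]
  ring

theorem norm_sub_star_sq_le (p s : ℍ[ℝ]) :
    ‖p - star s‖ ^ 2 ≤ (p.re - s.re) ^ 2 + (‖p.im‖ + ‖s.im‖) ^ 2 := by
  rw [norm_sq_eq_re_sq_add_norm_im_sq, re_sub, re_star, im_sub, im_star, sub_neg_eq_add]
  gcongr
  exact norm_add_le _ _

theorem sq_le_dist_sq_of_mem_quatSphere {p s t : ℍ[ℝ]} (ht : t ∈ quatSphere p) :
    (p.re - s.re) ^ 2 + (‖p.im‖ - ‖s.im‖) ^ 2 ≤ dist s t ^ 2 := by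
  have h := pow_le_pow_left₀ (abs_nonneg _) (abs_norm_sub_norm_le t.im s.im) 2
  rw [sq_abs] at h
  rw [dist_sq_eq_re_sq_add_dist_im_sq, dist_eq_norm, norm_sub_rev, ht.1, ← ht.2]
  linarith [sq_nonneg (p.re - s.re)]

theorem exists_mem_quatSphere_dist_sq_eq (p s : ℍ[ℝ]) :
    ∃ t ∈ quatSphere p, dist s t ^ 2 = (p.re - s.re) ^ 2 + (‖p.im‖ - ‖s.im‖) ^ 2 := by
  by_cases hs : s.im = 0
  · refine ⟨p, ⟨rfl, rfl⟩, ?_⟩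
    rw [dist_sq_eq_re_sq_add_dist_im_sq, hs, dist_zero_left, norm_zero, sub_zero]
    ring
  · have hb : ‖s.im‖ ≠ 0 := norm_ne_zero_iff.2 hs
    set r := ‖p.im‖ / ‖s.im‖ with hr
    refine ⟨(p.re : ℍ[ℝ]) + r • s.im, ⟨by simp, ?_⟩, ?_⟩
    · simp [norm_smul, r, hb]
    · rw [dist_sq_eq_re_sq_add_dist_im_sq, dist_eq_norm]
      simp only [re_add, re_coe, re_smul, re_im, smul_zero, add_zero, im_add, im_coe, im_smul,
        im_idem, zero_add]
      rw [show s.im - r • s.im = (1 - r) • s.im by module, norm_smul, Real.norm_eq_abs, mul_pow,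
        sq_abs, hr]
      field_simp
      ring

theorem infDist_quatSphere (p s : ℍ[ℝ]) :
    Metric.infDist s (quatSphere p) = √((p.re - s.re) ^ 2 + (‖p.im‖ - ‖s.im‖) ^ 2) := by
  obtain ⟨t, ht, hst⟩ := exists_mem_quatSphere_dist_sq_eq p s
  have hne : (quatSphere p).Nonempty := ⟨p, rfl, rfl⟩
  refine le_antisymm ?_ ((Metric.le_infDist hne).2 fun t ht ↦ ?_)
  · rw [← hst, Real.sqrt_sq dist_nonneg]
    exact Metric.infDist_le_dist_of_mem ht
  · exact Real.sqrt_le_left dist_nonneg |>.2 (sq_le_dist_sq_of_mem_quatSphere ht)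

theorem infDist_quatSphere_pos {p s : ℍ[ℝ]} (hs : s ∉ quatSphere p) :
    0 < Metric.infDist s (quatSphere p) := by
  rw [infDist_quatSphere, Real.sqrt_pos]
  by_contra! h
  exact hs ⟨by nlinarith [sq_nonneg (p.re - s.re), sq_nonneg (‖p.im‖ - ‖s.im‖)],
    by nlinarith [sq_nonneg (p.re - s.re), sq_nonneg (‖p.im‖ - ‖s.im‖)]⟩

theorem norm_sub_star_mul_infDist_le (p s : ℍ[ℝ]) :
    ‖p - star s‖ * Metric.infDist s (quatSphere p) ≤ ‖charQuadratic s p‖ := by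
  have hlhs : 0 ≤ ‖p - star s‖ * Metric.infDist s (quatSphere p) :=
    mul_nonneg (norm_nonneg _) Metric.infDist_nonneg
  refine (pow_le_pow_iff_left₀ hlhs (norm_nonneg _) two_ne_zero).1 ?_
  rw [mul_pow, norm_sq_charQuadratic, infDist_quatSphere,
    Real.sq_sqrt (by positivity), mul_comm]
  gcongr
  exact norm_sub_star_sq_le p s

/-- For `s ∉ [p]`, `|(p² - 2 Re(s) p + |s|²)⁻¹ (p - s̄)| ≤ dist([p], s)⁻¹`. -/
theorem kernel_norm_le_infDist (p s : ℍ[ℝ]) (hs : s ∉ quatSphere p) :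
    ‖(p ^ 2 - 2 * ((s.re : ℝ) : ℍ[ℝ]) * p + ((‖s‖ ^ 2 : ℝ) : ℍ[ℝ]))⁻¹ * (p - star s)‖
      ≤ 1 / Metric.infDist s (quatSphere p) := by
  have hd := infDist_quatSphere_pos hs
  rw [norm_mul, norm_inv, ← div_eq_inv_mul]
  refine div_le_of_le_mul₀ (norm_nonneg _) (by positivity) ?_
  rw [one_div_mul_eq_div, le_div_iff₀ hd]
  exact norm_sub_star_mul_infDist_le p s
end

section
/- Let f : H → X be a left slice hyperholomorphic function with values in a quaternionic Banach space X such that Λ∘f is bounded on H for every continuous linear functional Λ in the dual of X. Then f is constant. (Liouville theorem for vector-valued slice hyperholomorphic functions.) -/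
/-!
For a continuous functional `Λ`, the Cauchy–Riemann equations make `Λ ∘ f₀ + i Λ ∘ f₁` an entire
function of `u + i v`. Its real part is bounded, because `2 f₀(u, v) = f(u + v j) + f(u - v j)`,
so by Liouville's theorem applied to its exponential it is constant. By Hahn–Banach `f₀` and `f₁`
are then constant, `f₁` vanishes because it is odd, and every quaternion is of the form `u + v j`,
so `f` is the constant `f₀(0, 0)`.
-/

open Quaternion

variable {X : Type*} [NormedAddCommGroup X] [NormedSpace ℝ X] [Module ℍ[ℝ] X]

/-- `f : ℍ → X` is (entire) left slice hyperholomorphic: there are components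
`f₀` (even in `v`) and `f₁` (odd in `v`), real differentiable and satisfying the
Cauchy-Riemann equations `∂_u f₀ - ∂_v f₁ = 0`, `∂_v f₀ + ∂_u f₁ = 0`, with
`f (u + v • j) = f₀ (u,v) + j • f₁ (u,v)` for every purely imaginary unit `j`. -/
def IsEntireSliceHyperholo (f : ℍ[ℝ] → X) : Prop :=
  ∃ f₀ f₁ : ℝ × ℝ → X,
    (∀ u v : ℝ, f₀ (u, -v) = f₀ (u, v)) ∧
    (∀ u v : ℝ, f₁ (u, -v) = - f₁ (u, v)) ∧
    Differentiable ℝ f₀ ∧ Differentiable ℝ f₁ ∧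
    (∀ z : ℝ × ℝ, fderiv ℝ f₀ z (1, 0) = fderiv ℝ f₁ z (0, 1)) ∧
    (∀ z : ℝ × ℝ, fderiv ℝ f₀ z (0, 1) + fderiv ℝ f₁ z (1, 0) = 0) ∧
    (∀ j : ℍ[ℝ], j.re = 0 → ‖j‖ = 1 → ∀ u v : ℝ,
      f (((u : ℝ) : ℍ[ℝ]) + v • j) = f₀ (u, v) + j • f₁ (u, v))

theorem Differentiable.apply_eq_apply_of_re_le {G : ℂ → ℂ} (hG : Differentiable ℂ G) {C : ℝ}
    (hC : ∀ z, (G z).re ≤ C) (z w : ℂ) : G z = G w := by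
  have hexp : Differentiable ℂ (fun z => Complex.exp (G z)) := hG.cexp
  have hbdd : Bornology.IsBounded (Set.range fun z => Complex.exp (G z)) := by
    refine (Metric.isBounded_iff_subset_closedBall 0).2 ⟨Real.exp C, ?_⟩
    rintro _ ⟨z, rfl⟩
    simpa [Complex.norm_exp] using hC z
  have hexp_const : (fun z => Complex.exp (G z)) = fun _ => Complex.exp (G 0) :=
    funext fun z => hexp.apply_eq_apply_of_bounded hbdd z 0
  have hderiv : ∀ z, _root_.deriv G z = 0 := by
    intro z
    have hexp_deriv := (hG z).hasDerivAt.cexp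
    rw [hexp_const] at hexp_deriv
    exact (mul_eq_zero.1 (hexp_deriv.unique (hasDerivAt_const z _))).resolve_left
      (Complex.exp_ne_zero _)
  exact is_const_of_deriv_eq_zero hG hderiv z w

section CauchyRiemann

variable {E : Type*} [NormedAddCommGroup E] [NormedSpace ℝ E]

theorem differentiable_complex_of_cauchyRiemann {g h : ℝ × ℝ → ℝ}
    (hg : Differentiable ℝ g) (hh : Differentiable ℝ h)
    (hcr₁ : ∀ p, fderiv ℝ g p (1, 0) = fderiv ℝ h p (0, 1))
    (hcr₂ : ∀ p, fderiv ℝ g p (0, 1) + fderiv ℝ h p (1, 0) = 0) :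
    Differentiable ℂ (fun z : ℂ => (g (z.re, z.im) : ℂ) + h (z.re, z.im) * Complex.I) := by
  intro z
  set e : ℂ →L[ℝ] ℝ × ℝ := Complex.equivRealProdCLM.toContinuousLinearMap
  have hreal := (Complex.ofRealCLM.hasFDerivAt.comp z
      ((hg (e z)).hasFDerivAt.comp z e.hasFDerivAt)).add
    ((Complex.ofRealCLM.hasFDerivAt.comp z
      ((hh (e z)).hasFDerivAt.comp z e.hasFDerivAt)).mul_const Complex.I)
  refine (hreal.complexOfReal_hasFDerivAt ?_).differentiableAt
  have h₂ : fderiv ℝ g (e z) (0, 1) = -fderiv ℝ h (e z) (1, 0) :=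
    eq_neg_of_add_eq_zero_left (hcr₂ (e z))
  have he₁ : e 1 = (1, 0) := by simp [e]
  have heI : e Complex.I = (0, 1) := by simp [e]
  simp [Complex.ext_iff, he₁, heI, hcr₁ (e z), h₂]

variable {f₀ f₁ : ℝ × ℝ → E}

theorem dual_apply_eq_of_cauchyRiemann (hd₀ : Differentiable ℝ f₀) (hd₁ : Differentiable ℝ f₁)
    (hcr₁ : ∀ p, fderiv ℝ f₀ p (1, 0) = fderiv ℝ f₁ p (0, 1))
    (hcr₂ : ∀ p, fderiv ℝ f₀ p (0, 1) + fderiv ℝ f₁ p (1, 0) = 0)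
    (Λ : E →L[ℝ] ℝ) {C : ℝ} (hC : ∀ p, Λ (f₀ p) ≤ C) (p q : ℝ × ℝ) :
    Λ (f₀ p) = Λ (f₀ q) ∧ Λ (f₁ p) = Λ (f₁ q) := by
  have hfderiv : ∀ {φ : ℝ × ℝ → E}, Differentiable ℝ φ →
      ∀ p, fderiv ℝ (fun p => Λ (φ p)) p = Λ.comp (fderiv ℝ φ p) :=
    fun hφ p => (Λ.hasFDerivAt.comp p (hφ p).hasFDerivAt).fderiv
  have hG := differentiable_complex_of_cauchyRiemann (Λ.differentiable.comp hd₀)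
    (Λ.differentiable.comp hd₁)
    (fun p => by simp only [Function.comp_def, hfderiv hd₀, hfderiv hd₁,
      ContinuousLinearMap.comp_apply, hcr₁])
    (fun p => by simp only [Function.comp_def, hfderiv hd₀, hfderiv hd₁,
      ContinuousLinearMap.comp_apply, ← map_add, hcr₂, map_zero])
  have hconst := hG.apply_eq_apply_of_re_le (C := C) (fun z => by simpa using hC _)
    ⟨p.1, p.2⟩ ⟨q.1, q.2⟩
  simpa [Complex.ext_iff] using hconst

theorem eq_of_cauchyRiemann_of_forall_dual_le (hd₀ : Differentiable ℝ f₀)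
    (hd₁ : Differentiable ℝ f₁)
    (hcr₁ : ∀ p, fderiv ℝ f₀ p (1, 0) = fderiv ℝ f₁ p (0, 1))
    (hcr₂ : ∀ p, fderiv ℝ f₀ p (0, 1) + fderiv ℝ f₁ p (1, 0) = 0)
    (hC : ∀ Λ : E →L[ℝ] ℝ, ∃ C, ∀ p, Λ (f₀ p) ≤ C) (p q : ℝ × ℝ) :
    f₀ p = f₀ q ∧ f₁ p = f₁ q := by
  rw [SeparatingDual.eq_iff_forall_dual_eq (R := ℝ), SeparatingDual.eq_iff_forall_dual_eq (R := ℝ),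
    ← forall_and]
  intro Λ
  obtain ⟨C, hΛ⟩ := hC Λ
  exact dual_apply_eq_of_cauchyRiemann hd₀ hd₁ hcr₁ hcr₂ Λ hΛ p q

end CauchyRiemann

theorem Quaternion.norm_coeComplex_I : ‖((Complex.I : ℂ) : ℍ[ℝ])‖ = 1 := by
  rw [norm_eq_sqrt_real_inner, Quaternion.inner_self, Quaternion.normSq_def']
  simp

theorem Quaternion.exists_re_add_norm_im_smul (q : ℍ[ℝ]) :
    ∃ j : ℍ[ℝ], j.re = 0 ∧ ‖j‖ = 1 ∧ (q.re : ℍ[ℝ]) + ‖q.im‖ • j = q := by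
  rcases eq_or_ne q.im 0 with him | him
  · exact ⟨((Complex.I : ℂ) : ℍ[ℝ]), by simp, norm_coeComplex_I,
      by simpa [him] using q.re_add_im⟩
  · refine ⟨‖q.im‖⁻¹ • q.im, by simp, ?_, ?_⟩
    · rw [norm_smul, norm_inv, norm_norm, inv_mul_cancel₀ (norm_ne_zero_iff.2 him)]
    · rw [smul_smul, mul_inv_cancel₀ (norm_ne_zero_iff.2 him), one_smul, re_add_im]

theorem dual_apply_le_of_slice {f : ℍ[ℝ] → X} {f₀ f₁ : ℝ × ℝ → X}
    (hslice : ∀ j : ℍ[ℝ], j.re = 0 → ‖j‖ = 1 → ∀ u v : ℝ,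
      f ((u : ℍ[ℝ]) + v • j) = f₀ (u, v) + j • f₁ (u, v))
    (Λ : X →L[ℝ] ℝ) {C : ℝ} (hC : ∀ q, |Λ (f q)| ≤ C) (p : ℝ × ℝ) : Λ (f₀ p) ≤ C := by
  set j : ℍ[ℝ] := ((Complex.I : ℂ) : ℍ[ℝ])
  set qp : ℍ[ℝ] := (p.1 : ℍ[ℝ]) + p.2 • j
  set qm : ℍ[ℝ] := (p.1 : ℍ[ℝ]) + p.2 • -j
  have hmid : f₀ p + f₀ p = f qp + f qm := by
    rw [hslice j (by simp [j]) norm_coeComplex_I,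
      hslice (-j) (by simp [j]) (by rw [norm_neg, norm_coeComplex_I]), neg_smul]
    abel
  have hsum := congrArg Λ hmid
  rw [map_add, map_add] at hsum
  linarith [le_of_abs_le (hC qp), le_of_abs_le (hC qm)]

/-- **Liouville theorem** for vector-valued slice hyperholomorphic functions:
if `f : ℍ → X` is left slice hyperholomorphic and `Λ ∘ f` is bounded for every
continuous linear functional `Λ` in the dual of `X`, then `f` is constant. -/
theorem liouville_slice (f : ℍ[ℝ] → X) (hf : IsEntireSliceHyperholo f)
    (hb : ∀ Λ : X →L[ℝ] ℝ, ∃ C : ℝ, ∀ q : ℍ[ℝ], |Λ (f q)| ≤ C) :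
    ∀ p q : ℍ[ℝ], f p = f q := by
  obtain ⟨f₀, f₁, -, hodd, hd₀, hd₁, hcr₁, hcr₂, hslice⟩ := hf
  have hconst := eq_of_cauchyRiemann_of_forall_dual_le hd₀ hd₁ hcr₁ hcr₂ fun Λ =>
    (hb Λ).imp fun _ hC => dual_apply_le_of_slice hslice Λ hC
  have hf₁ : ∀ p, f₁ p = 0 := by
    have hodd₀ : f₁ (0, 0) = -f₁ (0, 0) := by simpa using hodd 0 0
    have := IsAddTorsionFree.of_isTorsionFree ℝ X
    exact fun p => (hconst p (0, 0)).2.trans (self_eq_neg.1 hodd₀)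
  have hf : ∀ q, f q = f₀ (0, 0) := by
    intro q
    obtain ⟨j, hj_re, hj_norm, hq⟩ := Quaternion.exists_re_add_norm_im_smul q
    rw [← hq, hslice j hj_re hj_norm, hf₁, smul_zero, add_zero, (hconst _ _).1]
  exact fun p q => (hf p).trans (hf q).symm
end

section
/- The slice-distributional adjoint of the global operator G_L, defined by ∫_{U∩ℂ_j} G_L^{*s}(φ) ψ du dv = ∫_{U∩ℂ_j} φ G_L(ψ) du dv for all right slice test functions φ and left slice test functions ψ, is given by G_L^{*s}(φ)(q) = -G_R(φ)(q) - 2 φ(q) Im(q), where G_R φ(q) = |Im(q)|² ∂φ/∂x₀(q) + Σ_{j=1}^3 x_j ∂φ/∂x_j(q) Im(q). -/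
open Quaternion MeasureTheory

/-- The left global operator `G_L`. -/
noncomputable def GLop (f : ℍ[ℝ] → ℍ[ℝ]) (q : ℍ[ℝ]) : ℍ[ℝ] :=
  ‖q.im‖ ^ 2 • fderiv ℝ f q 1 +
    q.im * (q.imI • fderiv ℝ f q (⟨0, 1, 0, 0⟩ : ℍ[ℝ]) +
      q.imJ • fderiv ℝ f q (⟨0, 0, 1, 0⟩ : ℍ[ℝ]) +
      q.imK • fderiv ℝ f q (⟨0, 0, 0, 1⟩ : ℍ[ℝ]))

/-- The right global operator `G_R`. -/
noncomputable def GRop (f : ℍ[ℝ] → ℍ[ℝ]) (q : ℍ[ℝ]) : ℍ[ℝ] :=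
  ‖q.im‖ ^ 2 • fderiv ℝ f q 1 +
    (q.imI • fderiv ℝ f q (⟨0, 1, 0, 0⟩ : ℍ[ℝ]) +
      q.imJ • fderiv ℝ f q (⟨0, 0, 1, 0⟩ : ℍ[ℝ]) +
      q.imK • fderiv ℝ f q (⟨0, 0, 0, 1⟩ : ℍ[ℝ])) * q.im

/-- The slice distributional adjoint `G_L^{*s}(φ) = -G_R(φ) - 2 φ Im q`. -/
noncomputable def GLsliceStar (φ : ℍ[ℝ] → ℍ[ℝ]) (q : ℍ[ℝ]) : ℍ[ℝ] :=
  - GRop φ q - 2 • (φ q * q.im)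

section Aux

open ContinuousLinearMap

/-- The linear embedding of the slice `ℂ_j` into `ℍ`. -/
noncomputable def sliceL (j : ℍ[ℝ]) : ℝ × ℝ →L[ℝ] ℍ[ℝ] :=
  (fst ℝ ℝ ℝ).smulRight (1 : ℍ[ℝ]) + (snd ℝ ℝ ℝ).smulRight j

lemma sliceL_apply (j : ℍ[ℝ]) (z : ℝ × ℝ) :
    sliceL j z = ((z.1 : ℝ) : ℍ[ℝ]) + z.2 • j := by
  simp only [sliceL, add_apply, smulRight_apply, coe_fst', coe_snd',
    ← Quaternion.coe_one, Quaternion.smul_coe, mul_one]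

lemma sliceL_e1 (j : ℍ[ℝ]) : sliceL j (1, 0) = 1 := by simp [sliceL_apply]
lemma sliceL_e2 (j : ℍ[ℝ]) : sliceL j (0, 1) = j := by simp [sliceL_apply]

lemma sliceL_injective (j : ℍ[ℝ]) (hj : j.re = 0) (hj1 : ‖j‖ = 1) :
    Function.Injective (sliceL j) := by
  have hj0 : j ≠ 0 := by
    intro h; rw [h] at hj1; simp at hj1
  intro z w h
  rw [sliceL_apply, sliceL_apply] at h
  have hre : z.1 = w.1 := by
    have := congrArg QuaternionAlgebra.re h
    simpa [hj] using this
  have him : z.2 = w.2 := by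
    have := congrArg QuaternionAlgebra.imI h
    have := congrArg QuaternionAlgebra.imJ h
    have h3 := congrArg QuaternionAlgebra.imK h
    -- use norms instead: z.2 • j = w.2 • j
    have h4 : z.2 • j = w.2 • j := by
      have : ((z.1 : ℝ) : ℍ[ℝ]) + z.2 • j - ((z.1 : ℝ) : ℍ[ℝ]) =
          ((w.1 : ℝ) : ℍ[ℝ]) + w.2 • j - ((z.1 : ℝ) : ℍ[ℝ]) := by rw [h]
      rw [hre] at this
      simpa using this
    have h5 : (z.2 - w.2) • j = 0 := by rw [sub_smul, h4, sub_self]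
    rcases smul_eq_zero.1 h5 with h6 | h6
    · linarith [sub_eq_zero.1 (by linarith [h6] : z.2 - w.2 = 0)]
    · exact absurd h6 hj0
  exact Prod.ext hre him

lemma jdec (j : ℍ[ℝ]) (hj : j.re = 0) :
    j.imI • (⟨0,1,0,0⟩:ℍ[ℝ]) + j.imJ • (⟨0,0,1,0⟩:ℍ[ℝ]) + j.imK • (⟨0,0,0,1⟩:ℍ[ℝ]) = j := by
  ext <;> simp [hj]

lemma im_slice (j : ℍ[ℝ]) (hj : j.re = 0) (u v : ℝ) :
    (((u:ℝ):ℍ[ℝ]) + v • j).im = v • j := by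
  ext <;> simp [hj]

lemma dirsum (f : ℍ[ℝ] → ℍ[ℝ]) (j : ℍ[ℝ]) (hj : j.re = 0) (u v : ℝ) :
    (((u:ℝ):ℍ[ℝ]) + v • j).imI • fderiv ℝ f (((u:ℝ):ℍ[ℝ]) + v • j) (⟨0,1,0,0⟩:ℍ[ℝ]) +
    (((u:ℝ):ℍ[ℝ]) + v • j).imJ • fderiv ℝ f (((u:ℝ):ℍ[ℝ]) + v • j) (⟨0,0,1,0⟩:ℍ[ℝ]) +
    (((u:ℝ):ℍ[ℝ]) + v • j).imK • fderiv ℝ f (((u:ℝ):ℍ[ℝ]) + v • j) (⟨0,0,0,1⟩:ℍ[ℝ])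
      = v • fderiv ℝ f (((u:ℝ):ℍ[ℝ]) + v • j) j := by
  set q := ((u:ℝ):ℍ[ℝ]) + v • j
  have h1 : q.imI = v * j.imI := by simp [q]
  have h2 : q.imJ = v * j.imJ := by simp [q]
  have h3 : q.imK = v * j.imK := by simp [q]
  rw [h1, h2, h3]
  conv_rhs => rw [← jdec j hj]
  simp only [map_add, _root_.map_smul, smul_add, mul_smul]
  erw [map_add, map_add, map_smul, map_smul, map_smul]
  simp only [smul_add]

lemma GLop_slice (ψ : ℍ[ℝ] → ℍ[ℝ]) (j : ℍ[ℝ]) (hj : j.re = 0) (hj1 : ‖j‖ = 1) (u v : ℝ) :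
    GLop ψ (((u:ℝ):ℍ[ℝ]) + v • j)
      = (v*v) • fderiv ℝ ψ (((u:ℝ):ℍ[ℝ]) + v • j) 1
        + (v*v) • (j * fderiv ℝ ψ (((u:ℝ):ℍ[ℝ]) + v • j) j) := by
  rw [GLop, dirsum ψ j hj, im_slice j hj, norm_smul, hj1]
  rw [smul_mul_smul_comm]
  congr 2
  simp [mul_pow, sq_abs, sq]

lemma GRop_slice (φ : ℍ[ℝ] → ℍ[ℝ]) (j : ℍ[ℝ]) (hj : j.re = 0) (hj1 : ‖j‖ = 1) (u v : ℝ) :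
    GRop φ (((u:ℝ):ℍ[ℝ]) + v • j)
      = (v*v) • fderiv ℝ φ (((u:ℝ):ℍ[ℝ]) + v • j) 1
        + (v*v) • (fderiv ℝ φ (((u:ℝ):ℍ[ℝ]) + v • j) j * j) := by
  rw [GRop, dirsum φ j hj, im_slice j hj, norm_smul, hj1]
  rw [smul_mul_smul_comm]
  congr 2
  simp [mul_pow, sq_abs, sq]

/-- The vector integral of a directional derivative of a smooth compactly supported
function vanishes. -/
lemma integral_fderiv_apply_eq_zero {P : ℝ × ℝ → ℍ[ℝ]} (hP : ContDiff ℝ (⊤ : ℕ∞) P)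
    (hPc : HasCompactSupport P) (w : ℝ × ℝ) :
    ∫ z : ℝ × ℝ, fderiv ℝ P z w = 0 := by
  have h1 : Integrable (fun z : ℝ × ℝ ↦ fderiv ℝ P z w) := by
    refine Continuous.integrable_of_hasCompactSupport
      ((hP.continuous_fderiv (by simp)).clm_apply continuous_const) ?_
    exact (hPc.fderiv (𝕜 := ℝ)).comp_left (g := fun L : (ℝ × ℝ) →L[ℝ] ℍ[ℝ] => L w) rfl
  have h0 : Integrable (fun z : ℝ × ℝ ↦
      (fderiv ℝ (fun _ : ℝ × ℝ => (1:ℝ)) z w) • P z) := by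
    simpa [fderiv_fun_const] using (integrable_zero (ℝ × ℝ) ℍ[ℝ] volume)
  have h2 : Integrable (fun z : ℝ × ℝ ↦ (1:ℝ) • P z) := by
    simpa using hP.continuous.integrable_of_hasCompactSupport hPc
  have h3 : Integrable (fun z : ℝ × ℝ ↦ (1:ℝ) • fderiv ℝ P z w) := by simpa using h1
  have := integral_smul_fderiv_eq_neg_fderiv_smul_of_integrable
    (f := fun _ : ℝ × ℝ => (1:ℝ)) (g := P) (v := w) h0 h3 h2
    (fun x _ => differentiableAt_const _) (fun x _ => hP.differentiable (by simp) x)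
  simpa [fderiv_fun_const] using this

end Aux

section Key

open ContinuousLinearMap

lemma keyP (j : ℍ[ℝ]) (φ ψ : ℍ[ℝ] → ℍ[ℝ]) (hφs : ContDiff ℝ (⊤ : ℕ∞) φ) (hψs : ContDiff ℝ (⊤ : ℕ∞) ψ)
    (z : ℝ × ℝ) :
    fderiv ℝ (fun z : ℝ × ℝ => (z.2 * z.2) • (φ (sliceL j z) * ψ (sliceL j z))) z (1, 0)
      = (z.2 * z.2) • (fderiv ℝ φ (sliceL j z) 1 * ψ (sliceL j z))
        + (z.2 * z.2) • (φ (sliceL j z) * fderiv ℝ ψ (sliceL j z) 1) := by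
  have hdf : HasFDerivAt (fun z => φ (sliceL j z)) ((fderiv ℝ φ (sliceL j z)).comp (sliceL j)) z :=
    ((hφs.differentiable (by simp) _).hasFDerivAt).comp z (sliceL j).hasFDerivAt
  have hdg : HasFDerivAt (fun z => ψ (sliceL j z)) ((fderiv ℝ ψ (sliceL j z)).comp (sliceL j)) z :=
    ((hψs.differentiable (by simp) _).hasFDerivAt).comp z (sliceL j).hasFDerivAt
  have hsq : HasFDerivAt (fun z : ℝ × ℝ => z.2 * z.2)
      (z.2 • snd ℝ ℝ ℝ + z.2 • snd ℝ ℝ ℝ) z := hasFDerivAt_snd.mul hasFDerivAt_snd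
  have hP : HasFDerivAt (fun z : ℝ × ℝ => (z.2 * z.2) • (φ (sliceL j z) * ψ (sliceL j z))) _ z :=
    hsq.smul (hdf.mul' hdg)
  rw [hP.fderiv]
  simp [sliceL_e1, smul_eq_mul, smul_add]
  abel

lemma keyQ (j : ℍ[ℝ]) (φ ψ : ℍ[ℝ] → ℍ[ℝ]) (hφs : ContDiff ℝ (⊤ : ℕ∞) φ) (hψs : ContDiff ℝ (⊤ : ℕ∞) ψ)
    (z : ℝ × ℝ) :
    fderiv ℝ (fun z : ℝ × ℝ => (z.2 * z.2) • (φ (sliceL j z) * (j * ψ (sliceL j z)))) z (0, 1)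
      = (z.2 * z.2) • (fderiv ℝ φ (sliceL j z) j * (j * ψ (sliceL j z)))
        + (z.2 * z.2) • (φ (sliceL j z) * (j * fderiv ℝ ψ (sliceL j z) j))
        + (z.2 + z.2) • (φ (sliceL j z) * (j * ψ (sliceL j z))) := by
  have hdf : HasFDerivAt (fun z => φ (sliceL j z)) ((fderiv ℝ φ (sliceL j z)).comp (sliceL j)) z :=
    ((hφs.differentiable (by simp) _).hasFDerivAt).comp z (sliceL j).hasFDerivAt
  have hdg : HasFDerivAt (fun z => ψ (sliceL j z)) ((fderiv ℝ ψ (sliceL j z)).comp (sliceL j)) z :=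
    ((hψs.differentiable (by simp) _).hasFDerivAt).comp z (sliceL j).hasFDerivAt
  have hdg' := hdg.const_mul j
  have hsq : HasFDerivAt (fun z : ℝ × ℝ => z.2 * z.2)
      (z.2 • snd ℝ ℝ ℝ + z.2 • snd ℝ ℝ ℝ) z := hasFDerivAt_snd.mul hasFDerivAt_snd
  have hQ : HasFDerivAt
      (fun z : ℝ × ℝ => (z.2 * z.2) • (φ (sliceL j z) * (j * ψ (sliceL j z)))) _ z :=
    hsq.smul (hdf.mul' hdg')
  rw [hQ.fderiv]
  simp [sliceL_e2, smul_eq_mul, smul_add, add_smul]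
  abel

lemma keyptwise (j : ℍ[ℝ]) (hj : j.re = 0) (hj1 : ‖j‖ = 1)
    (φ ψ : ℍ[ℝ] → ℍ[ℝ]) (hφs : ContDiff ℝ (⊤ : ℕ∞) φ) (hψs : ContDiff ℝ (⊤ : ℕ∞) ψ) (z : ℝ × ℝ) :
    GLsliceStar φ (sliceL j z) * ψ (sliceL j z)
      = φ (sliceL j z) * GLop ψ (sliceL j z)
        - fderiv ℝ (fun z : ℝ × ℝ => (z.2 * z.2) • (φ (sliceL j z) * ψ (sliceL j z))) z (1, 0)
        - fderiv ℝ (fun z : ℝ × ℝ =>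
            (z.2 * z.2) • (φ (sliceL j z) * (j * ψ (sliceL j z)))) z (0, 1) := by
  rw [keyP j φ ψ hφs hψs, keyQ j φ ψ hφs hψs, GLsliceStar]
  have h1 : sliceL j z = ((z.1 : ℝ) : ℍ[ℝ]) + z.2 • j := sliceL_apply j z
  rw [h1, GRop_slice φ j hj hj1, GLop_slice ψ j hj hj1, im_slice j hj]
  simp only [sub_mul, neg_mul, add_mul, smul_mul_assoc, mul_smul_comm, mul_add, mul_assoc,
    two_smul, add_smul, smul_add, neg_add]
  abel

end Key

/-- **The slice adjoint of `G_L`.** For every right slice test function `φ` and left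
slice test function `ψ` supported in an axially symmetric open `U`, integrating over
the slice `U ∩ ℂ_j` one has `∫ G_L^{*s}(φ) ψ = ∫ φ G_L(ψ)`, where
`G_L^{*s}(φ) = -G_R(φ) - 2 φ Im q`. -/
theorem slice_adjoint_GL
    (U : Set ℍ[ℝ]) (hUo : IsOpen U)
    (j : ℍ[ℝ]) (hj : j.re = 0) (hj1 : ‖j‖ = 1)
    (φ ψ : ℍ[ℝ] → ℍ[ℝ])
    (hφs : ContDiff ℝ (⊤ : ℕ∞) φ) (hψs : ContDiff ℝ (⊤ : ℕ∞) ψ)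
    (hφc : HasCompactSupport φ) (hψc : HasCompactSupport ψ)
    (hφU : tsupport φ ⊆ U) (hψU : tsupport ψ ⊆ U)
    -- φ is a right slice function with components a₀ (even), a₁ (odd)
    (a₀ a₁ : ℝ × ℝ → ℍ[ℝ])
    (ha₀ : ∀ u v : ℝ, a₀ (u, -v) = a₀ (u, v))
    (ha₁ : ∀ u v : ℝ, a₁ (u, -v) = - a₁ (u, v))
    (hφ : ∀ i : ℍ[ℝ], i.re = 0 → ‖i‖ = 1 → ∀ u v : ℝ,
      φ (((u : ℝ) : ℍ[ℝ]) + v • i) = a₀ (u, v) + a₁ (u, v) * i)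
    -- ψ is a left slice function with components b₀ (even), b₁ (odd)
    (b₀ b₁ : ℝ × ℝ → ℍ[ℝ])
    (hb₀ : ∀ u v : ℝ, b₀ (u, -v) = b₀ (u, v))
    (hb₁ : ∀ u v : ℝ, b₁ (u, -v) = - b₁ (u, v))
    (hψ : ∀ i : ℍ[ℝ], i.re = 0 → ‖i‖ = 1 → ∀ u v : ℝ,
      ψ (((u : ℝ) : ℍ[ℝ]) + v • i) = b₀ (u, v) + i * b₁ (u, v)) :
    ∫ z in {z : ℝ × ℝ | ((z.1 : ℝ) : ℍ[ℝ]) + z.2 • j ∈ U},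
        GLsliceStar φ (((z.1 : ℝ) : ℍ[ℝ]) + z.2 • j) * ψ (((z.1 : ℝ) : ℍ[ℝ]) + z.2 • j)
      = ∫ z in {z : ℝ × ℝ | ((z.1 : ℝ) : ℍ[ℝ]) + z.2 • j ∈ U},
          φ (((z.1 : ℝ) : ℍ[ℝ]) + z.2 • j) * GLop ψ (((z.1 : ℝ) : ℍ[ℝ]) + z.2 • j) := by
  clear ha₀ ha₁ hφ hb₀ hb₁ hψ hUo
  simp only [← sliceL_apply]
  -- basic facts
  have hLc : Continuous (sliceL j) := (sliceL j).continuous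
  have hLemb : Topology.IsClosedEmbedding (sliceL j) := by
    have h := LinearMap.isClosedEmbedding_of_injective
      (f := ((sliceL j) : (ℝ × ℝ) →ₗ[ℝ] ℍ[ℝ]))
      (LinearMap.ker_eq_bot.2 (sliceL_injective j hj hj1))
    exact h
  have hfc : HasCompactSupport (fun z => φ (sliceL j z)) :=
    hφc.comp_isClosedEmbedding hLemb
  have hgc : HasCompactSupport (fun z => ψ (sliceL j z)) :=
    hψc.comp_isClosedEmbedding hLemb
  have hfC : Continuous (fun z => φ (sliceL j z)) := hφs.continuous.comp hLc
  have hgC : Continuous (fun z => ψ (sliceL j z)) := hψs.continuous.comp hLc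
  -- derivative components are continuous
  have hdfC : ∀ w : ℍ[ℝ], Continuous (fun z => fderiv ℝ φ (sliceL j z) w) := fun w =>
    (((hφs.continuous_fderiv (by simp)).comp hLc).clm_apply continuous_const)
  have hdgC : ∀ w : ℍ[ℝ], Continuous (fun z => fderiv ℝ ψ (sliceL j z) w) := fun w =>
    (((hψs.continuous_fderiv (by simp)).comp hLc).clm_apply continuous_const)
  -- P and Q
  set P : ℝ × ℝ → ℍ[ℝ] :=
    fun z : ℝ × ℝ => (z.2 * z.2) • (φ (sliceL j z) * ψ (sliceL j z)) with hPdef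
  set Q : ℝ × ℝ → ℍ[ℝ] :=
    fun z : ℝ × ℝ => (z.2 * z.2) • (φ (sliceL j z) * (j * ψ (sliceL j z))) with hQdef
  have hPs : ContDiff ℝ (⊤ : ℕ∞) P :=
    (contDiff_snd.mul contDiff_snd).smul
      ((hφs.comp (sliceL j).contDiff).mul (hψs.comp (sliceL j).contDiff))
  have hQs : ContDiff ℝ (⊤ : ℕ∞) Q :=
    (contDiff_snd.mul contDiff_snd).smul
      ((hφs.comp (sliceL j).contDiff).mul (contDiff_const.mul (hψs.comp (sliceL j).contDiff)))
  have hPc : HasCompactSupport P := by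
    apply hfc.mono
    intro z hz
    simp only [Function.mem_support, hPdef] at hz ⊢
    intro h0
    exact hz (by rw [h0, zero_mul, smul_zero])
  have hQc : HasCompactSupport Q := by
    apply hfc.mono
    intro z hz
    simp only [Function.mem_support, hQdef] at hz ⊢
    intro h0
    exact hz (by rw [h0, zero_mul, smul_zero])
  -- integrability
  have iDP : Integrable (fun z : ℝ × ℝ => fderiv ℝ P z (1, 0)) := by
    refine Continuous.integrable_of_hasCompactSupport
      ((hPs.continuous_fderiv (by simp)).clm_apply continuous_const) ?_
    exact (hPc.fderiv (𝕜 := ℝ)).comp_left (g := fun L : (ℝ × ℝ) →L[ℝ] ℍ[ℝ] => L (1, 0)) rfl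
  have iDQ : Integrable (fun z : ℝ × ℝ => fderiv ℝ Q z (0, 1)) := by
    refine Continuous.integrable_of_hasCompactSupport
      ((hQs.continuous_fderiv (by simp)).clm_apply continuous_const) ?_
    exact (hQc.fderiv (𝕜 := ℝ)).comp_left (g := fun L : (ℝ × ℝ) →L[ℝ] ℍ[ℝ] => L (0, 1)) rfl
  -- the right-hand integrand
  have hReq : (fun z : ℝ × ℝ => φ (sliceL j z) * GLop ψ (sliceL j z))
      = fun z : ℝ × ℝ => φ (sliceL j z) *
          ((z.2 * z.2) • fderiv ℝ ψ (sliceL j z) 1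
            + (z.2 * z.2) • (j * fderiv ℝ ψ (sliceL j z) j)) := by
    funext z
    rw [sliceL_apply, GLop_slice ψ j hj hj1]
  have iR : Integrable (fun z : ℝ × ℝ => φ (sliceL j z) * GLop ψ (sliceL j z)) := by
    rw [hReq]
    refine Continuous.integrable_of_hasCompactSupport
      (hfC.mul (((continuous_snd.mul continuous_snd).smul (hdgC 1)).add
        ((continuous_snd.mul continuous_snd).smul (continuous_const.mul (hdgC j))))) ?_
    apply hfc.mono
    intro z hz
    simp only [Function.mem_support] at hz ⊢
    intro h0
    exact hz (by rw [h0, zero_mul])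
  -- reduce set integrals to full integrals
  rw [setIntegral_eq_integral_of_forall_compl_eq_zero (fun z hz => by
    have h0 : ψ (sliceL j z) = 0 :=
      image_eq_zero_of_notMem_tsupport (fun hmem => hz (hψU hmem))
    rw [h0, mul_zero])]
  rw [setIntegral_eq_integral_of_forall_compl_eq_zero (fun z hz => by
    have h0 : φ (sliceL j z) = 0 :=
      image_eq_zero_of_notMem_tsupport (fun hmem => hz (hφU hmem))
    rw [h0, zero_mul])]
  -- main computation
  calc ∫ z : ℝ × ℝ, GLsliceStar φ (sliceL j z) * ψ (sliceL j z)
      = ∫ z : ℝ × ℝ, (φ (sliceL j z) * GLop ψ (sliceL j z)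
          - (fderiv ℝ P z (1, 0) + fderiv ℝ Q z (0, 1))) := by
        congr 1
        funext z
        rw [keyptwise j hj hj1 φ ψ hφs hψs z]
        abel
    _ = (∫ z : ℝ × ℝ, φ (sliceL j z) * GLop ψ (sliceL j z))
          - ∫ z : ℝ × ℝ, (fderiv ℝ P z (1, 0) + fderiv ℝ Q z (0, 1)) :=
        integral_sub iR (iDP.add iDQ)
    _ = ∫ z : ℝ × ℝ, φ (sliceL j z) * GLop ψ (sliceL j z) := by
        rw [integral_add iDP iDQ, integral_fderiv_apply_eq_zero hPs hPc,
          integral_fderiv_apply_eq_zero hQs hQc]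
        simp
end
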